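/- arXiv:1510.08722 — 2 statements merged into one kernel-verified Lean document; each statement's English description precedes it below -/
import Mathlib

section
/- In a solid, the product of two elements is a magnitude if and only if at least one factor is a magnitude: x·y = e(x·y) iff x = e(x) or y = e(y). -/
/-!
For zeroless `x`, `y` we may assume both positive, since replacing a factor by its opposite
keeps the product a magnitude. Then `e(xy) = e(x)y + e(y)x` is a sum of two magnitudes, hence
equal to one of them, say `e(x)y`. Cancelling `y` gives `x·u(y) = e(x)·u(y) ≤ e(x)`, because
`e(u(y)) ≤ u(y) ≤ 2`. Put `w = u(y)` and `d = 1 - w`. As `yw = y`, the product `yd` lies below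
`e(y)`, so `w ≤ d` would give `y = yw ≤ yd ≤ e(y)`. Hence `d ≤ w`, so `xd ≤ xw ≤ e(x)`, and
`x ≤ x(1 + e(w)) = x(w + d) ≤ xw + xd ≤ e(x)`, contradicting that `x` is positive and zeroless.
-/

structure Assembly (A : Type*) where
  add : A → A → A
  e : A → A
  neg : A → A
  add_assoc : ∀ x y z, add x (add y z) = add (add x y) z
  add_comm : ∀ x y, add x y = add y x
  add_e : ∀ x, add x (e x) = x
  e_max : ∀ x f, add x f = x → add (e x) f = e x
  add_neg : ∀ x, add x (neg x) = e x
  e_neg : ∀ x, e (neg x) = e x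
  e_add : ∀ x y, e (add x y) = e x ∨ e (add x y) = e y

structure OrderedAssembly (A : Type*) extends Assembly A where
  le : A → A → Prop
  le_refl : ∀ x, le x x
  le_antisymm : ∀ x y, le x y → le y x → x = y
  le_trans : ∀ x y z, le x y → le y z → le x z
  le_total : ∀ x y, le x y ∨ le y x
  add_le_add : ∀ x y z, le x y → le (add x z) (add y z)
  le_e : ∀ x y, add y (e x) = e x → le y (e x) ∧ le (neg y) (e x)

structure Solid (A : Type*) extends OrderedAssembly A where
  mul : A → A → A
  u : A → A
  inv : A → A
  mul_assoc : ∀ x y z, mul x (mul y z) = mul (mul x y) z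
  mul_comm : ∀ x y, mul x y = mul y x
  mul_u : ∀ x, x ≠ e x → mul x (u x) = x
  u_max : ∀ x, x ≠ e x → ∀ v, mul x v = x → mul (u x) v = u x
  mul_inv : ∀ x, x ≠ e x → mul x (inv x) = u x
  u_inv : ∀ x, x ≠ e x → u (inv x) = u x
  u_mul : ∀ x y, x ≠ e x → y ≠ e y →
    u (mul x y) = u x ∨ u (mul x y) = u y
  compat_mul : ∀ x y z, le (e x) x → e x ≠ x → le y z → le (mul x y) (mul x z)
  amplification : ∀ x y z, le (e y) y → le y z → le (mul (e x) y) (mul (e x) z)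
  escala : ∀ x y, ∃ z, mul (e x) y = e z
  e_mul : ∀ x y, e (mul x y) = add (mul (e x) y) (mul (e y) x)
  e_u : ∀ x, x ≠ e x → e (u x) = mul (e x) (inv x)
  dist : ∀ x y z, add (mul x y) (mul x z) =
    add (add (mul x (add y z)) (mul (e x) y)) (mul (e x) z)
  neg_mul : ∀ x y, neg (mul x y) = mul (neg x) y
  zero : A
  add_zero : ∀ x, add x zero = x
  one : A
  one_mul : ∀ x, mul one x = x
  M : A
  e_add_M : ∀ x, add (e x) M = M
  exists_neutrix : ∃ x, e x ≠ zero ∧ e x ≠ M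
  decomp : ∀ x, ∃ a, x = add a (e x) ∧ e a = zero
  dense : ∀ x y, x = e x → y = e y → le x y → x ≠ y →
    ∃ z, z ≠ e z ∧ le x z ∧ x ≠ z ∧ le z y ∧ z ≠ y

namespace Assembly

variable {A : Type*} (S : Assembly A)

local infixl:65 " ⊹ " => S.add

theorem e_e (x : A) : S.e (S.e x) = S.e x := by
  have h : S.e x ⊹ S.e x = S.e x := S.e_max x (S.e x) (S.add_e x)
  have h' : S.e (S.e x) ⊹ S.e x = S.e (S.e x) := S.e_max (S.e x) (S.e x) h
  rw [← h', S.add_comm, S.add_e]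

theorem add_left_comm (a b c : A) : a ⊹ (b ⊹ c) = b ⊹ (a ⊹ c) := by
  rw [S.add_assoc, S.add_comm a b, ← S.add_assoc]

theorem add_self_of_mag {n : A} (hn : n = S.e n) : n ⊹ n = n :=
  (congrArg (S.add n) hn).trans (S.add_e n)

theorem add_mag_eq_or {m n : A} (hm : m = S.e m) (hn : n = S.e n) :
    m ⊹ n = m ∨ m ⊹ n = n := by
  have key : ∀ {a b : A}, a = S.e a → b = S.e b → S.e (a ⊹ b) = S.e a → a ⊹ b = a := by
    intro a b ha hb h
    have hab : (a ⊹ b) ⊹ b = a ⊹ b := by rw [← S.add_assoc, S.add_self_of_mag hb]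
    have h' := S.e_max (a ⊹ b) b hab
    rwa [h, ← ha] at h'
  rcases S.e_add m n with h | h
  · exact Or.inl (key hm hn h)
  · right
    rw [S.add_comm] at h ⊢
    exact key hn hm h

theorem neg_of_mag {n : A} (hn : n = S.e n) : S.neg n = n := by
  have h1 := S.add_e (S.neg n)
  have h2 := S.add_neg n
  rw [S.e_neg, ← hn, S.add_comm] at h1
  rw [← hn] at h2
  exact h1.symm.trans h2

theorem neg_zeroless {x : A} (hx : x ≠ S.e x) : S.neg x ≠ S.e (S.neg x) := by
  intro h
  rw [S.e_neg] at h
  apply hx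
  have h' := S.add_neg x
  rwa [h, S.add_e] at h'

end Assembly

namespace OrderedAssembly

variable {A : Type*} (S : OrderedAssembly A)

local infixl:65 " ⊹ " => S.add
local infix:50 " ≼ " => S.le

theorem add_le_add_left {a b : A} (c : A) (h : a ≼ b) : c ⊹ a ≼ c ⊹ b := by
  simpa only [S.add_comm c] using S.add_le_add a b c h

theorem add_le_of_le_mag {a b n : A} (hn : n = S.e n) (ha : a ≼ n) (hb : b ≼ n) :
    a ⊹ b ≼ n := by
  have h := S.le_trans _ _ _ (S.add_le_add a n b ha) (S.add_le_add_left n hb)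
  rwa [S.add_self_of_mag hn] at h

theorem e_neg_le_neg {x : A} (h : x ≼ S.e x) : S.e (S.neg x) ≼ S.neg x := by
  have h' := S.add_le_add x (S.e x) (S.neg x) h
  have he : S.e x ⊹ S.neg x = S.neg x := by rw [S.add_comm, ← S.e_neg x, S.add_e]
  rwa [S.add_neg, he, ← S.e_neg] at h'

end OrderedAssembly

namespace Solid

variable {A : Type*} (S : Solid A)

local infixl:65 " ⊹ " => S.add
local infixl:70 " ⨳ " => S.mul
local infix:50 " ≼ " => S.le

theorem mul_one (x : A) : x ⨳ S.one = x := by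
  rw [S.mul_comm, S.one_mul]

theorem mul_neg (x y : A) : x ⨳ S.neg y = S.neg (x ⨳ y) := by
  rw [S.mul_comm, ← S.neg_mul, S.mul_comm]

theorem mag_mul {n : A} (hn : n = S.e n) (y : A) : n ⨳ y = S.e (n ⨳ y) := by
  obtain ⟨z, hz⟩ := S.escala n y
  rw [← hn] at hz
  rw [hz, S.e_e]

theorem mul_mag (x : A) {n : A} (hn : n = S.e n) : x ⨳ n = S.e (x ⨳ n) := by
  rw [S.mul_comm]
  exact S.mag_mul hn x

theorem zero_le_of_mag {n : A} (hn : n = S.e n) : S.zero ≼ n := by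
  have h : S.zero ⊹ S.e n = S.e n := by rw [S.add_comm, S.add_zero]
  rw [hn]
  exact (S.le_e n S.zero h).1

theorem le_add_of_mag (t : A) {n : A} (hn : n = S.e n) : t ≼ t ⊹ n := by
  simpa only [S.add_zero] using S.add_le_add_left t (S.zero_le_of_mag hn)

theorem mul_add_le (x a b : A) : x ⨳ (a ⊹ b) ≼ x ⨳ a ⊹ x ⨳ b := by
  have hexmag := (S.e_e x).symm
  rw [S.dist]
  exact S.le_trans _ _ _ (S.le_add_of_mag _ (S.mag_mul hexmag a))
    (S.le_add_of_mag _ (S.mag_mul hexmag b))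

theorem mag_mul_two_le {n : A} (hn : n = S.e n) : n ⨳ (S.one ⊹ S.one) ≼ n := by
  have h := S.dist n S.one S.one
  rw [← hn, S.mul_one, ← S.add_assoc, S.add_self_of_mag hn] at h
  have h' : n ⨳ (S.one ⊹ S.one) ⊹ S.e n = S.e n := by rw [← hn]; exact h.symm
  have hle := (S.le_e n _ h').1
  rwa [← hn] at hle

theorem e_unity_mul {t : A} (ht : t ≠ S.e t) : S.e (S.u t) ⨳ t = S.e t ⨳ S.u t := by
  rw [S.e_u t ht, ← S.mul_assoc, S.mul_comm (S.inv t), S.mul_inv t ht]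

theorem e_mul_unity {t : A} (ht : t ≠ S.e t) : S.e t ⨳ S.u t = S.e t := by
  have h := S.e_mul t (S.u t)
  rw [S.mul_u t ht, S.e_unity_mul ht,
    S.add_self_of_mag (S.mag_mul (S.e_e t).symm _)] at h
  exact h.symm

theorem mul_e_unity {t : A} (ht : t ≠ S.e t) : t ⨳ S.e (S.u t) = S.e t := by
  rw [S.mul_comm, S.e_unity_mul ht, S.e_mul_unity ht]

theorem e_unity_le_unity {t : A} (ht : t ≠ S.e t) (hp : S.e t ≼ t) :
    S.e (S.u t) ≼ S.u t := by
  refine (S.le_total _ _).resolve_right fun h => ht ?_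
  have h' := S.compat_mul t _ _ hp (Ne.symm ht) h
  rw [S.mul_u t ht, S.mul_e_unity ht] at h'
  exact S.le_antisymm _ _ h' hp

theorem unity_le_two {t : A} (ht : t ≠ S.e t) (hp : S.e t ≼ t) :
    S.u t ≼ S.one ⊹ S.one := by
  refine (S.le_total _ _).resolve_right fun h => ht ?_
  have h2t : t ⨳ (S.one ⊹ S.one) ≼ t := by
    simpa only [S.mul_u t ht] using S.compat_mul t _ _ hp (Ne.symm ht) h
  have hdist : t ⊹ t = t ⨳ (S.one ⊹ S.one) ⊹ S.e t := by
    have h' := S.dist t S.one S.one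
    rwa [S.mul_one t, S.mul_one (S.e t), ← S.add_assoc,
      S.add_self_of_mag (S.e_e t).symm] at h'
  have hle : t ⊹ t ≼ t := by
    rw [hdist]
    simpa only [S.add_e] using S.add_le_add _ _ (S.e t) h2t
  have hge : t ≼ t ⊹ t := by
    simpa only [S.add_e] using S.add_le_add_left t hp
  have htt := S.e_max t t (S.le_antisymm _ _ hle hge)
  rw [S.add_comm] at htt
  exact S.le_antisymm _ _ (S.le_e t t htt).1 hp

theorem e_mul_unity_le (x : A) {t : A} (ht : t ≠ S.e t) (hp : S.e t ≼ t) :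
    S.e x ⨳ S.u t ≼ S.e x :=
  S.le_trans _ _ _ (S.amplification x _ _ (S.e_unity_le_unity ht hp) (S.unity_le_two ht hp))
    (S.mag_mul_two_le (S.e_e x).symm)

theorem mul_one_sub_unity_add_e {t : A} (ht : t ≠ S.e t) :
    t ⨳ (S.one ⊹ S.neg (S.u t)) ⊹ S.e t = S.e t := by
  have h := S.dist t S.one (S.neg (S.u t))
  rw [S.mul_one t, S.mul_one (S.e t), S.mul_neg t, S.mul_neg (S.e t), S.mul_u t ht,
    S.e_mul_unity ht, S.add_neg, S.neg_of_mag (S.e_e t).symm, ← S.add_assoc,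
    S.add_self_of_mag (S.e_e t).symm] at h
  exact h.symm

theorem not_mul_unity_le_e {x y : A} (hx : x ≠ S.e x) (hpx : S.e x ≼ x)
    (hy : y ≠ S.e y) (hpy : S.e y ≼ y) : ¬ x ⨳ S.u y ≼ S.e x := by
  intro h
  set w := S.u y
  set d := S.one ⊹ S.neg w
  rcases S.le_total w d with hwd | hdw
  · have hyd := S.compat_mul y w d hpy (Ne.symm hy) hwd
    rw [S.mul_u y hy] at hyd
    exact hy (S.le_antisymm _ _
      (S.le_trans _ _ _ hyd (S.le_e y _ (S.mul_one_sub_unity_add_e hy)).1) hpy)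
  · have hxd : x ⨳ d ≼ S.e x := S.le_trans _ _ _ (S.compat_mul x d w hpx (Ne.symm hx) hdw) h
    have hwd : w ⊹ d = S.one ⊹ S.e w := by rw [S.add_left_comm, S.add_neg]
    have hx_le : x ≼ x ⨳ (w ⊹ d) := by
      rw [hwd]
      simpa only [S.mul_one] using
        S.compat_mul x _ _ hpx (Ne.symm hx) (S.le_add_of_mag S.one (S.e_e w).symm)
    exact hx (S.le_antisymm _ _ (S.le_trans _ _ _ (S.le_trans _ _ _ hx_le (S.mul_add_le x w d))
      (S.add_le_of_le_mag (S.e_e x).symm h hxd)) hpx)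

theorem mul_ne_e_mul_of_pos {x y : A} (hx : x ≠ S.e x) (hpx : S.e x ≼ x)
    (hy : y ≠ S.e y) (hpy : S.e y ≼ y) : x ⨳ y ≠ S.e x ⨳ y := by
  intro h
  apply S.not_mul_unity_le_e hx hpx hy hpy
  have h' : x ⨳ S.u y = S.e x ⨳ S.u y := by
    rw [← S.mul_inv y hy, S.mul_assoc, S.mul_assoc, h]
  rw [h']
  exact S.e_mul_unity_le x hy hpy

theorem mul_ne_mag_of_pos {x y : A} (hx : x ≠ S.e x) (hpx : S.e x ≼ x)
    (hy : y ≠ S.e y) (hpy : S.e y ≼ y) : x ⨳ y ≠ S.e (x ⨳ y) := by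
  intro hm
  rw [S.e_mul] at hm
  rcases S.add_mag_eq_or (S.mag_mul (S.e_e x).symm y) (S.mag_mul (S.e_e y).symm x) with h | h
  · exact S.mul_ne_e_mul_of_pos hx hpx hy hpy (hm.trans h)
  · exact S.mul_ne_e_mul_of_pos hy hpy hx hpx ((S.mul_comm y x).trans (hm.trans h))

theorem mul_ne_mag_of_pos_left {x y : A} (hx : x ≠ S.e x) (hpx : S.e x ≼ x)
    (hy : y ≠ S.e y) : x ⨳ y ≠ S.e (x ⨳ y) := by
  intro hm
  rcases S.le_total (S.e y) y with hpy | hny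
  · exact S.mul_ne_mag_of_pos hx hpx hy hpy hm
  · refine S.mul_ne_mag_of_pos hx hpx (S.neg_zeroless hy) (S.e_neg_le_neg hny) ?_
    rw [S.mul_neg, S.neg_of_mag hm]
    exact hm

theorem mul_ne_mag {x y : A} (hx : x ≠ S.e x) (hy : y ≠ S.e y) : x ⨳ y ≠ S.e (x ⨳ y) := by
  intro hm
  rcases S.le_total (S.e x) x with hpx | hnx
  · exact S.mul_ne_mag_of_pos_left hx hpx hy hm
  · refine S.mul_ne_mag_of_pos_left (S.neg_zeroless hx) (S.e_neg_le_neg hnx) hy ?_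
    rw [← S.neg_mul, S.neg_of_mag hm]
    exact hm

end Solid

theorem stmt8 {A : Type*} (S : Solid A) (x y : A) :
    S.mul x y = S.e (S.mul x y) ↔ x = S.e x ∨ y = S.e y := by
  refine ⟨fun hm => ?_, ?_⟩
  · by_contra! h
    exact S.mul_ne_mag h.1 h.2 hm
  · rintro (hx | hy)
    · exact S.mag_mul hx y
    · exact S.mul_mag x hy
end

section
/- In a solid, distributivity x·y + x·z = x·(y+z) holds if and only if either e(x)·(y+z) = e(x)·y + e(x)·z or R(x) ≤ R(y) + R(z), where R(w) denotes the relative uncertainty of w, defined as R(w) = e(u(w)) when w is zeroless (w ≠ e(w)) and R(w) = M (the maximal magnitude) when w = e(w). -/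
open Classical in
/-- The relative uncertainty: `R w = e (u w)` for zeroless `w`, and the
maximal magnitude `M` when `w` is a magnitude. -/
noncomputable def Solid.R {A : Type*} (S : Solid A) (w : A) : A :=
  if w = S.e w then S.M else S.e (S.u w)

/-!
By the modified distributivity axiom, `xy + xz = x(y+z) + (e(x)y + e(x)z)`, so distributivity
holds iff the magnitude `e(x)y + e(x)z` is absorbed by `e(x(y+z)) = e(x)(y+z) + e(y+z)x`. A sum
of magnitudes is the larger of the two, so this means that `e(x)y + e(x)z` is bounded by
`e(x)(y+z)` (the first alternative) or by `e(y+z)x = e(y)x + e(z)x`.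

For zeroless `x, y` one has `e(x)y = R(x)·(xy)`, and also `e(x)y = R(x)·(ab)` for the precise
parts `a, b` of `x, y`. Hence comparing `e(x)y + e(x)z` with `e(y)x + e(z)x` amounts to comparing
`R(x)` with `R(y) + R(z)`; the precise product `ab` can be cancelled because `u(ab) = 1`.
If `y` or `z` is a magnitude the first alternative always holds, and if `x` is a magnitude then
`R(x) = M ≤ R(y) + R(z) ≤ 1` is impossible: `M` is the largest magnitude, and some magnitude
exceeds `1`.
-/
namespace Solid

variable {A : Type*}

def IsMagnitude (S : Solid A) (m : A) : Prop := S.e m = m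

variable {S : Solid A}

section Magnitude

theorem e_e (x : A) : S.e (S.e x) = S.e x := by
  have h : S.add (S.e (S.e x)) (S.e x) = S.e (S.e x) :=
    S.e_max (S.e x) (S.e x) (S.e_max x (S.e x) (S.add_e x))
  rw [← h, S.add_comm, S.add_e]

theorem isMagnitude_e (S : Solid A) (x : A) : IsMagnitude S (S.e x) := e_e x

theorem IsMagnitude.add_self {m : A} (hm : IsMagnitude S m) : S.add m m = m := by
  have h := S.add_e m
  rwa [hm] at h

theorem isMagnitude_of_add_self {m : A} (h : S.add m m = m) : IsMagnitude S m := by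
  have h' : S.add (S.e m) m = S.e m := S.e_max m m h
  show S.e m = m
  rw [← h', S.add_comm, S.add_e]

theorem zero_add (x : A) : S.add S.zero x = x := by
  rw [S.add_comm, S.add_zero]

theorem e_zero : S.e S.zero = S.zero := by
  rw [← S.add_zero (S.e S.zero), S.add_comm, S.add_e]

theorem add_left_comm (a b c : A) : S.add a (S.add b c) = S.add b (S.add a c) := by
  rw [S.add_assoc, S.add_comm a b, ← S.add_assoc]

theorem add_right_comm (a b c : A) : S.add (S.add a b) c = S.add (S.add a c) b := by
  rw [← S.add_assoc, S.add_comm b c, S.add_assoc]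

theorem add_add_add_comm (a b c d : A) :
    S.add (S.add a b) (S.add c d) = S.add (S.add a c) (S.add b d) := by
  rw [← S.add_assoc, add_left_comm b, S.add_assoc]

theorem le_e_of_add_eq_self {x p : A} (h : S.add x p = x) : S.le p (S.e x) :=
  (S.le_e x p (by rw [S.add_comm]; exact S.e_max x p h)).1

theorem IsMagnitude.zero_le {m : A} (hm : IsMagnitude S m) : S.le S.zero m := by
  have h := le_e_of_add_eq_self (S.add_zero m)
  rwa [hm] at h

theorem IsMagnitude.add_eq_right_of_le {p q : A} (hp : IsMagnitude S p)
    (hq : IsMagnitude S q) (h : S.le p q) : S.add p q = q := by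
  apply S.le_antisymm
  · simpa only [hq.add_self] using S.add_le_add p q q h
  · simpa only [zero_add] using S.add_le_add _ _ q hp.zero_le

theorem isMagnitude_add {p q : A} (hp : IsMagnitude S p) (hq : IsMagnitude S q) :
    IsMagnitude S (S.add p q) := by
  apply isMagnitude_of_add_self
  rw [← S.add_assoc, add_left_comm q, S.add_assoc, hp.add_self, hq.add_self]

theorem add_eq_or {p q : A} (hp : IsMagnitude S p) (hq : IsMagnitude S q) :
    S.add p q = p ∨ S.add p q = q := by
  have h := S.e_add p q
  rwa [isMagnitude_add hp hq, hp, hq] at h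

theorem le_add_left {p q : A} (hp : IsMagnitude S p) (hq : IsMagnitude S q) :
    S.le p (S.add p q) := by
  have h : S.add (S.add p q) p = S.add p q := by
    rw [add_right_comm, hp.add_self]
  have h' := le_e_of_add_eq_self h
  rwa [isMagnitude_add hp hq] at h'

theorem le_add_right {p q : A} (hp : IsMagnitude S p) (hq : IsMagnitude S q) :
    S.le q (S.add p q) := by
  rw [S.add_comm]; exact le_add_left hq hp

theorem add_le {p q r : A} (hp : IsMagnitude S p) (hq : IsMagnitude S q)
    (h₁ : S.le p r) (h₂ : S.le q r) : S.le (S.add p q) r := by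
  rcases add_eq_or hp hq with h | h <;> rw [h] <;> assumption

theorem le_add_iff {p q r : A} (hq : IsMagnitude S q) (hr : IsMagnitude S r) :
    S.le p (S.add q r) ↔ S.le p q ∨ S.le p r := by
  refine ⟨fun h => ?_, ?_⟩
  · rcases add_eq_or hq hr with h' | h' <;> rw [h'] at h <;> simp [h]
  · rintro (h | h)
    · exact S.le_trans _ _ _ h (le_add_left hq hr)
    · exact S.le_trans _ _ _ h (le_add_right hq hr)

theorem add_eq_self_iff_le_e {x p : A} (hp : IsMagnitude S p) :
    S.add x p = x ↔ S.le p (S.e x) := by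
  refine ⟨le_e_of_add_eq_self, fun h => ?_⟩
  conv_lhs => rw [← S.add_e x]
  rw [← S.add_assoc, S.add_comm (S.e x) p, hp.add_eq_right_of_le (S.isMagnitude_e x) h, S.add_e]

theorem e_add_eq (x y : A) : S.e (S.add x y) = S.add (S.e x) (S.e y) := by
  have hx : S.le (S.e x) (S.e (S.add x y)) := by
    apply le_e_of_add_eq_self
    rw [add_right_comm, S.add_e]
  have hy : S.le (S.e y) (S.e (S.add x y)) := by
    apply le_e_of_add_eq_self
    rw [← S.add_assoc, S.add_e]
  rcases S.e_add x y with h | h <;> rw [h] at hx hy ⊢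
  · rw [S.add_comm]
    exact ((S.isMagnitude_e y).add_eq_right_of_le (S.isMagnitude_e x) hy).symm
  · exact ((S.isMagnitude_e x).add_eq_right_of_le (S.isMagnitude_e y) hx).symm

end Magnitude

section Negation

theorem eq_neg_of_add_eq_e {s w : A} (h₁ : S.add s w = S.e w) (h₂ : S.e s = S.e w) :
    s = S.neg w := by
  have hnw : S.add (S.neg w) (S.e w) = S.neg w := by
    simpa only [S.e_neg] using S.add_e (S.neg w)
  rw [← S.add_e s, h₂, ← S.add_neg w, S.add_assoc, h₁, S.add_comm, hnw]

theorem IsMagnitude.neg_eq {m : A} (hm : IsMagnitude S m) : S.neg m = m :=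
  (eq_neg_of_add_eq_e (by rw [hm, hm.add_self]) rfl).symm

theorem neg_neg (x : A) : S.neg (S.neg x) = x :=
  (eq_neg_of_add_eq_e (by rw [S.e_neg, S.add_neg]) (S.e_neg x).symm).symm

theorem neg_add (a b : A) : S.neg (S.add a b) = S.add (S.neg a) (S.neg b) := by
  symm
  apply eq_neg_of_add_eq_e
  · rw [add_add_add_comm, S.add_comm (S.neg a), S.add_comm (S.neg b), S.add_neg, S.add_neg,
      e_add_eq]
  · rw [e_add_eq, S.e_neg, S.e_neg, e_add_eq]

theorem neg_zero : S.neg S.zero = S.zero := IsMagnitude.neg_eq e_zero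

theorem e_ne_neg {x : A} (hx : x ≠ S.e x) : S.neg x ≠ S.e (S.neg x) := by
  rw [S.e_neg]
  intro h
  apply hx
  rw [← neg_neg x, h, (S.isMagnitude_e x).neg_eq, e_e]

theorem add_le_add_left {y z : A} (x : A) (h : S.le y z) : S.le (S.add x y) (S.add x z) := by
  simpa only [S.add_comm x] using S.add_le_add y z x h

theorem add_le_add_of_le_of_le {a b c d : A} (h₁ : S.le a b) (h₂ : S.le c d) :
    S.le (S.add a c) (S.add b d) :=
  S.le_trans _ _ _ (S.add_le_add a b c h₁) (add_le_add_left b h₂)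

theorem le_add_of_isMagnitude (x : A) {p : A} (hp : IsMagnitude S p) : S.le x (S.add x p) := by
  simpa only [zero_add, S.add_comm p] using S.add_le_add S.zero p x hp.zero_le

theorem le_add_e_of_add_le_add {a b c : A} (h : S.le (S.add a c) (S.add b c)) :
    S.le a (S.add b (S.e c)) := by
  have h' := S.add_le_add _ _ (S.neg c) h
  rw [← S.add_assoc, ← S.add_assoc, S.add_neg] at h'
  exact S.le_trans _ _ _ (le_add_of_isMagnitude a (S.isMagnitude_e c)) h'

theorem e_le_of_zero_le {s : A} (h : S.le S.zero s) : S.le (S.e s) s := by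
  simpa only [zero_add, S.add_e] using S.add_le_add S.zero s (S.e s) h

theorem e_neg_le_neg {w : A} (hw : S.le w (S.e w)) : S.le (S.e (S.neg w)) (S.neg w) := by
  have h := S.add_le_add w (S.e w) (S.neg w) hw
  rwa [S.add_neg, S.add_comm, ← S.e_neg, S.add_e] at h

end Negation

section MagnitudeMul

theorem IsMagnitude.mul_right {p : A} (hp : IsMagnitude S p) (w : A) :
    IsMagnitude S (S.mul p w) := by
  obtain ⟨z, hz⟩ := S.escala p w
  rw [hp] at hz
  rw [hz]
  exact S.isMagnitude_e z

theorem IsMagnitude.mul_left {p : A} (hp : IsMagnitude S p) (w : A) :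
    IsMagnitude S (S.mul w p) := by
  rw [S.mul_comm]; exact hp.mul_right w

theorem IsMagnitude.mul_le_mul_left {m y z : A} (hm : IsMagnitude S m)
    (hy : S.le (S.e y) y) (h : S.le y z) : S.le (S.mul m y) (S.mul m z) := by
  have h' := S.amplification m y z hy h
  rwa [hm] at h'

theorem IsMagnitude.mul_neg {p : A} (hp : IsMagnitude S p) (w : A) :
    S.mul p (S.neg w) = S.mul p w := by
  rw [S.mul_comm p, ← S.neg_mul, S.mul_comm w, (hp.mul_right w).neg_eq]

theorem mul_le_mul_of_isMagnitude {p q : A} (hp : IsMagnitude S p) (hq : IsMagnitude S q)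
    (h : S.le p q) (w : A) : S.le (S.mul w p) (S.mul w q) := by
  by_cases hw : w = S.e w
  · rw [hw]
    exact S.amplification w p q (by rw [hp]; exact S.le_refl p) h
  rcases S.le_total (S.e w) w with hw' | hw'
  · exact S.compat_mul w p q hw' (Ne.symm hw) h
  · have h' := S.compat_mul (S.neg w) p q (e_neg_le_neg hw') (Ne.symm (e_ne_neg hw)) h
    rwa [← S.neg_mul, ← S.neg_mul, (hp.mul_left w).neg_eq, (hq.mul_left w).neg_eq] at h'

theorem mul_add_of_isMagnitude {p q : A} (hp : IsMagnitude S p) (hq : IsMagnitude S q)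
    (w : A) : S.mul w (S.add p q) = S.add (S.mul w p) (S.mul w q) := by
  rcases S.le_total p q with h | h
  · rw [hp.add_eq_right_of_le hq h, (hp.mul_left w).add_eq_right_of_le (hq.mul_left w)
      (mul_le_mul_of_isMagnitude hp hq h w)]
  · rw [S.add_comm p, hq.add_eq_right_of_le hp h, S.add_comm (S.mul w p),
      (hq.mul_left w).add_eq_right_of_le (hp.mul_left w) (mul_le_mul_of_isMagnitude hq hp h w)]

theorem e_mul_le_mul {p : A} (hp : IsMagnitude S p) (w : A) :
    S.le (S.mul (S.e w) p) (S.mul w p) := by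
  have h := le_add_left ((S.isMagnitude_e w).mul_right p) ((S.isMagnitude_e p).mul_right w)
  rwa [← S.e_mul, hp.mul_left w] at h

theorem IsMagnitude.mul_add_le {p : A} (hp : IsMagnitude S p) (y z : A) :
    S.le (S.mul p (S.add y z)) (S.add (S.mul p y) (S.mul p z)) := by
  have h := S.dist p y z
  rw [hp, ← S.add_assoc] at h
  have h' := le_e_of_add_eq_self (x := S.add (S.mul p y) (S.mul p z))
    (by rw [S.add_comm]; exact h.symm)
  rwa [isMagnitude_add (hp.mul_right y) (hp.mul_right z)] at h'

theorem IsMagnitude.mul_le_mul_add {p : A} (hp : IsMagnitude S p) (d : A) {q : A}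
    (hq : IsMagnitude S q) : S.le (S.mul p d) (S.mul p (S.add d q)) := by
  rcases S.le_total (S.e d) d with hd | hd
  · exact hp.mul_le_mul_left hd (le_add_of_isMagnitude d hq)
  · have h := hp.mul_le_mul_left (e_neg_le_neg hd) (le_add_of_isMagnitude (S.neg d) hq)
    rwa [← hq.neg_eq, ← neg_add, hp.mul_neg, hp.mul_neg] at h

theorem IsMagnitude.mul_add_of_isMagnitude {p q : A} (hp : IsMagnitude S p)
    (hq : IsMagnitude S q) (z : A) :
    S.mul p (S.add z q) = S.add (S.mul p z) (S.mul p q) := by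
  refine S.le_antisymm _ _ (hp.mul_add_le z q) ?_
  refine add_le (hp.mul_right z) (hp.mul_right q) (hp.mul_le_mul_add z hq) ?_
  have hq_le : S.le q (S.e (S.add z q)) := by
    rw [e_add_eq, hq]
    exact le_add_right (S.isMagnitude_e z) hq
  refine S.le_trans _ _ _ (mul_le_mul_of_isMagnitude hq (S.isMagnitude_e _) hq_le p) ?_
  simpa only [S.mul_comm p] using e_mul_le_mul hp (S.add z q)

theorem IsMagnitude.mul_le_mul_add_add_mul {p : A} (hp : IsMagnitude S p) (y z : A) :
    S.le (S.mul p z) (S.add (S.mul p (S.add y z)) (S.mul p y)) := by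
  have h := hp.mul_add_le (S.add y z) (S.neg y)
  rw [hp.mul_neg, add_right_comm y z (S.neg y), S.add_neg, S.add_comm (S.e y) z,
    hp.mul_add_of_isMagnitude (S.isMagnitude_e y)] at h
  exact S.le_trans _ _ _ (le_add_left (hp.mul_right z) (hp.mul_right _)) h

end MagnitudeMul

section Unit

theorem IsMagnitude.eq_e_of_eq {x m : A} (hm : IsMagnitude S m) (h : x = m) : x = S.e x := by
  rw [h, hm]

theorem u_ne_e {x : A} (hx : x ≠ S.e x) : S.u x ≠ S.e (S.u x) := by
  intro h
  apply hx
  refine ((S.isMagnitude_e (S.u x)).mul_left x).eq_e_of_eq ?_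
  conv_lhs => rw [← S.mul_u x hx]
  rw [← h]

theorem inv_ne_e {x : A} (hx : x ≠ S.e x) : S.inv x ≠ S.e (S.inv x) := by
  intro h
  apply u_ne_e hx
  refine ((S.isMagnitude_e (S.inv x)).mul_left x).eq_e_of_eq ?_
  rw [← S.mul_inv x hx, ← h]

theorem u_mul_self {x : A} (hx : x ≠ S.e x) : S.mul (S.u x) (S.u x) = S.u x :=
  S.u_max x hx (S.u x) (S.mul_u x hx)

theorem e_u_mul {x : A} (hx : x ≠ S.e x) : S.mul (S.e (S.u x)) x = S.e x := by
  have h := S.e_mul x (S.u x)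
  have h' : S.mul (S.e (S.u x)) x = S.mul (S.e x) (S.u x) := by
    rw [S.e_u x hx, ← S.mul_assoc, S.mul_comm (S.inv x), S.mul_inv x hx]
  rw [S.mul_u x hx, h', ((S.isMagnitude_e x).mul_right _).add_self] at h
  rw [h']
  exact h.symm

theorem e_mul_eq_e_u_mul_mul {x : A} (hx : x ≠ S.e x) (y : A) :
    S.mul (S.e x) y = S.mul (S.e (S.u x)) (S.mul x y) := by
  rw [S.mul_assoc, e_u_mul hx]

theorem u_neg {x : A} (hx : x ≠ S.e x) : S.u (S.neg x) = S.u x := by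
  have hnx := e_ne_neg hx
  have h₁ : S.mul (S.u (S.neg x)) (S.u x) = S.u (S.neg x) :=
    S.u_max _ hnx _ (by rw [← S.neg_mul, S.mul_u x hx])
  have h₂ : S.mul (S.u x) (S.u (S.neg x)) = S.u x := by
    refine S.u_max _ hx _ ?_
    have h := congrArg S.neg (S.mul_u _ hnx)
    rwa [S.neg_mul, neg_neg] at h
  rw [← h₁, S.mul_comm, h₂]

theorem e_u_le_u {x : A} (hx : x ≠ S.e x) : S.le (S.e (S.u x)) (S.u x) := by
  suffices key : ∀ w, w ≠ S.e w → S.le (S.e w) w → S.le (S.e (S.u w)) (S.u w) by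
    rcases S.le_total (S.e x) x with h | h
    · exact key x hx h
    · simpa only [u_neg hx] using key _ (e_ne_neg hx) (e_neg_le_neg h)
  intro w hw hpos
  rcases S.le_total (S.e (S.u w)) (S.u w) with h | h
  · exact h
  · have h' := S.compat_mul w _ _ hpos (Ne.symm hw) h
    rw [S.mul_u w hw, S.mul_comm w, e_u_mul hw] at h'
    exact absurd (S.le_antisymm _ _ h' hpos) hw

theorem e_inv_le_inv {x : A} (hx : x ≠ S.e x) (hpos : S.le (S.e x) x) :
    S.le (S.e (S.inv x)) (S.inv x) := by
  rcases S.le_total (S.e (S.inv x)) (S.inv x) with h | h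
  · exact h
  · have h₁ := S.compat_mul x _ _ hpos (Ne.symm hx) h
    rw [S.mul_inv x hx] at h₁
    have h₂ : S.le (S.mul x (S.e (S.inv x))) (S.e (S.u x)) := by
      rw [← S.mul_inv x hx, S.e_mul, S.mul_comm x]
      exact le_add_right ((S.isMagnitude_e x).mul_right _) ((S.isMagnitude_e _).mul_right x)
    exact absurd (S.le_antisymm _ _ (S.le_trans _ _ _ h₁ h₂) (e_u_le_u hx)) (u_ne_e hx)

theorem e_le_of_eq_add_e {w d : A} (hw : w ≠ S.e w) (hpos : S.le (S.e w) w)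
    (hd : w = S.add d (S.e w)) : S.le (S.e w) d := by
  rcases S.le_total (S.e w) d with h | h
  · exact h
  · have h' := S.add_le_add d (S.e w) (S.e w) h
    rw [(S.isMagnitude_e w).add_self, ← hd] at h'
    exact absurd (S.le_antisymm _ _ h' hpos) hw

theorem IsMagnitude.mul_eq_mul_of_eq_add_e {p w d : A} (hp : IsMagnitude S p)
    (hw : w ≠ S.e w) (hd : w = S.add d (S.e w)) : S.mul p w = S.mul p d := by
  have he : S.le (S.mul p (S.e w)) (S.mul p d) := by
    have hee : S.le (S.e (S.e w)) (S.e w) := by rw [e_e]; exact S.le_refl _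
    rcases S.le_total (S.e w) w with hpos | hneg
    · exact hp.mul_le_mul_left hee (e_le_of_eq_add_e hw hpos hd)
    · have hd' : S.neg w = S.add (S.neg d) (S.e (S.neg w)) := by
        rw [S.e_neg, ← (S.isMagnitude_e w).neg_eq, ← neg_add, ← hd]
      have h := e_le_of_eq_add_e (e_ne_neg hw) (e_neg_le_neg hneg) hd'
      rw [S.e_neg] at h
      simpa only [hp.mul_neg] using hp.mul_le_mul_left hee h
  conv_lhs => rw [hd]
  rw [hp.mul_add_of_isMagnitude (S.isMagnitude_e w), S.add_comm,
    (hp.mul_right _).add_eq_right_of_le (hp.mul_right d) he]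

theorem e_eq_e_u_mul {x d : A} (hx : x ≠ S.e x) (hd : x = S.add d (S.e x)) :
    S.e x = S.mul (S.e (S.u x)) d := by
  rw [← (S.isMagnitude_e (S.u x)).mul_eq_mul_of_eq_add_e hx hd, e_u_mul hx]

end Unit

section RelativeUncertainty

theorem e_u_le_one {x : A} (hx : x ≠ S.e x) : S.le (S.e (S.u x)) S.one := by
  suffices key : ∀ w, w ≠ S.e w → S.le (S.e w) w → ¬ S.le S.one (S.e (S.u w)) by
    rcases S.le_total (S.e (S.u x)) S.one with h | h
    · exact h
    rcases S.le_total (S.e x) x with hpos | hneg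
    · exact absurd h (key x hx hpos)
    · exact absurd (by rwa [u_neg hx]) (key _ (e_ne_neg hx) (e_neg_le_neg hneg))
  intro w hw hpos h
  obtain ⟨a, ha, ha0⟩ := S.decomp w
  have ha_ne : a ≠ S.e a := by
    intro h'
    rw [h'.trans ha0, zero_add] at ha
    exact hw ha
  have ha_pos : S.le (S.e a) a := by
    rcases S.le_total (S.e a) a with h' | h'
    · exact h'
    · have h'' := S.add_le_add _ _ (S.e w) h'
      rw [← ha, ha0, zero_add] at h''
      exact absurd (S.le_antisymm _ _ h'' hpos) hw
  -- `a ≤ a·R(w) = e(w) ≤ a` forces the zeroless `a` to be a magnitude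
  have h₁ := S.compat_mul a _ _ ha_pos (Ne.symm ha_ne) h
  rw [S.mul_comm a S.one, S.one_mul, S.mul_comm, ← e_eq_e_u_mul hw ha] at h₁
  apply ha_ne
  rw [S.le_antisymm _ _ h₁ (e_le_of_eq_add_e hw hpos ha), e_e]

end RelativeUncertainty

section Precise

theorem isMagnitude_zero : IsMagnitude S S.zero := e_zero

theorem exists_zeroless_le_isMagnitude :
    ∃ σ n : A, σ ≠ S.e σ ∧ S.le S.zero σ ∧ IsMagnitude S n ∧ S.le σ n := by
  obtain ⟨x₀, h₀, -⟩ := S.exists_neutrix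
  obtain ⟨σ, hσ, hσ₀, -, hσn, -⟩ := S.dense S.zero (S.e x₀) e_zero.symm (e_e x₀).symm
    (S.isMagnitude_e x₀).zero_le (Ne.symm h₀)
  exact ⟨σ, S.e x₀, hσ, hσ₀, S.isMagnitude_e x₀, hσn⟩

theorem one_ne_e : S.one ≠ S.e S.one := by
  intro h
  obtain ⟨σ, -, hσ, -⟩ := exists_zeroless_le_isMagnitude (S := S)
  apply hσ
  refine ((S.isMagnitude_e S.one).mul_right σ).eq_e_of_eq ?_
  conv_lhs => rw [← S.one_mul σ]
  rw [← h]

theorem u_one : S.u S.one = S.one := by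
  simpa only [S.one_mul] using S.mul_u S.one one_ne_e

theorem e_one_mul_le (x : A) : S.le (S.mul (S.e S.one) x) (S.e x) := by
  have h := le_add_left ((S.isMagnitude_e S.one).mul_right x) ((S.isMagnitude_e x).mul_right S.one)
  rwa [← S.e_mul, S.one_mul] at h

theorem e_one : S.e S.one = S.zero := by
  obtain ⟨a, ha, ha0⟩ := S.decomp S.one
  have h₁ := e_eq_e_u_mul one_ne_e ha
  rw [u_one] at h₁
  have h := e_one_mul_le (S := S) a
  rw [ha0, ← h₁] at h
  exact S.le_antisymm _ _ h (S.isMagnitude_e _).zero_le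

theorem zero_mul_of_e_eq_zero {a : A} (ha0 : S.e a = S.zero) : S.mul S.zero a = S.zero := by
  refine S.le_antisymm _ _ ?_ (isMagnitude_zero.mul_right a).zero_le
  simpa only [e_one, ha0] using e_one_mul_le (S := S) a

theorem zero_mul_e (w : A) : S.mul S.zero w = S.mul S.zero (S.e w) := by
  obtain ⟨a, ha, ha0⟩ := S.decomp w
  conv_lhs => rw [ha]
  rw [isMagnitude_zero.mul_add_of_isMagnitude (S.isMagnitude_e w), zero_mul_of_e_eq_zero ha0,
    zero_add]

theorem zero_mul_of_le_one {m : A} (hm : IsMagnitude S m) (h : S.le m S.one) :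
    S.mul S.zero m = S.zero := by
  refine S.le_antisymm _ _ ?_ (isMagnitude_zero.mul_right m).zero_le
  have h' := isMagnitude_zero.mul_le_mul_left (by rw [hm]; exact S.le_refl m) h
  rwa [S.mul_comm S.zero S.one, S.one_mul] at h'

theorem e_u_eq_zero {t : A} (ht : t ≠ S.e t) (ht0 : S.e t = S.zero) :
    S.e (S.u t) = S.zero := by
  obtain ⟨a, ha, ha0⟩ := S.decomp (S.inv t)
  have h₁ : S.e (S.inv t) = S.mul (S.e (S.u t)) a := by
    rw [e_eq_e_u_mul (inv_ne_e ht) ha, S.u_inv t ht]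
  have h := S.e_u t ht
  rwa [ht0, zero_mul_e, h₁, S.mul_comm (S.e (S.u t)), S.mul_assoc, zero_mul_of_e_eq_zero ha0,
    zero_mul_of_le_one (S.isMagnitude_e _) (e_u_le_one ht)] at h

theorem zero_mul_inv {c : A} (hc : c ≠ S.e c) (hc0 : S.e c = S.zero) :
    S.mul S.zero (S.inv c) = S.zero := by
  have h := S.e_u c hc
  rwa [hc0, e_u_eq_zero hc hc0, eq_comm] at h

theorem mul_u_eq_zero_of_mul_eq_zero {b c : A} (hc : c ≠ S.e c) (hc0 : S.e c = S.zero)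
    (h : S.mul b c = S.zero) : S.mul b (S.u c) = S.zero := by
  rw [← S.mul_inv c hc, S.mul_assoc, h, zero_mul_inv hc hc0]

theorem eq_of_add_neg_eq_zero {a b : A} (hb0 : S.e b = S.zero)
    (h : S.add a (S.neg b) = S.zero) : a = b :=
  calc a = S.add a (S.add b (S.neg b)) := by rw [S.add_neg, hb0, S.add_zero]
    _ = S.add b (S.add a (S.neg b)) := add_left_comm _ _ _
    _ = b := by rw [h, S.add_zero]

theorem mul_add_neg_one_eq_zero {t v : A} (ht0 : S.e t = S.zero) (hv0 : S.e v = S.zero)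
    (h : S.mul t v = t) : S.mul t (S.add v (S.neg S.one)) = S.zero := by
  have hd := S.dist t v (S.neg S.one)
  have hn0 : S.e (S.neg S.one) = S.zero := by rw [S.e_neg, e_one]
  rw [ht0, zero_mul_of_e_eq_zero hv0, zero_mul_of_e_eq_zero hn0, S.add_zero, S.add_zero, h,
    S.mul_comm t, ← S.neg_mul, S.one_mul, S.add_neg, ht0] at hd
  exact hd.symm

theorem not_mul_le_e_of_u_le {b w : A} (hb : b ≠ S.e b) (hpos : S.le (S.e b) b)
    (h : S.le (S.u b) w) : ¬ S.le (S.mul b w) (S.e b) := by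
  intro h'
  have h'' := S.compat_mul b _ _ hpos (Ne.symm hb) h
  rw [S.mul_u b hb] at h''
  exact hb (S.le_antisymm _ _ (S.le_trans _ _ _ h'' h') hpos)

theorem u_eq_one_of_pos {b : A} (hb : b ≠ S.e b) (hpos : S.le (S.e b) b)
    (hb0 : S.e b = S.zero) : S.u b = S.one := by
  have hv0 : S.e (S.u b) = S.zero := e_u_eq_zero hb hb0
  have hg0 : S.e (S.add (S.u b) (S.neg S.one)) = S.zero := by
    rw [e_add_eq, S.e_neg, hv0, e_one, S.add_zero]
  have hbg := mul_add_neg_one_eq_zero hb0 hv0 (S.mul_u b hb)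
  have hvg := mul_add_neg_one_eq_zero hv0 hv0 (u_mul_self hb)
  by_contra hne
  have hg : S.add (S.u b) (S.neg S.one) ≠ S.e (S.add (S.u b) (S.neg S.one)) := by
    rw [hg0]
    exact fun h => hne (eq_of_add_neg_eq_zero e_one h)
  generalize S.add (S.u b) (S.neg S.one) = g at hg0 hbg hvg hg
  -- `g = u b - 1` is precise and annihilated by `b` and by `u b`; pass to a positive `c = ±g`
  obtain ⟨c, hc, hcpos, hc0, hbc, hvc⟩ : ∃ c, c ≠ S.e c ∧ S.le (S.e c) c ∧
      S.e c = S.zero ∧ S.mul b c = S.zero ∧ S.mul (S.u b) c = S.zero := by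
    rcases S.le_total (S.e g) g with h | h
    · exact ⟨g, hg, h, hg0, hbg, hvg⟩
    · refine ⟨S.neg g, e_ne_neg hg, e_neg_le_neg h, by rw [S.e_neg, hg0], ?_, ?_⟩
      · rw [S.mul_comm, ← S.neg_mul, S.mul_comm, hbg, neg_zero]
      · rw [S.mul_comm, ← S.neg_mul, S.mul_comm, hvg, neg_zero]
  rcases S.le_total (S.u b) (S.u c) with h | h
  · refine not_mul_le_e_of_u_le hb hpos h ?_
    rw [mul_u_eq_zero_of_mul_eq_zero hc hc0 hbc, hb0]
    exact S.le_refl _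
  · refine not_mul_le_e_of_u_le hc hcpos h ?_
    rw [S.mul_comm, hvc, hc0]
    exact S.le_refl _

theorem u_eq_one {a : A} (ha : a ≠ S.e a) (ha0 : S.e a = S.zero) : S.u a = S.one := by
  rcases S.le_total (S.e a) a with h | h
  · exact u_eq_one_of_pos ha h ha0
  · rw [← u_neg ha]
    exact u_eq_one_of_pos (e_ne_neg ha) (e_neg_le_neg h) (by rw [S.e_neg, ha0])

theorem e_ne_of_eq_add_e {x a : A} (hx : x ≠ S.e x) (ha : x = S.add a (S.e x))
    (ha0 : S.e a = S.zero) : a ≠ S.e a := by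
  intro h
  rw [h.trans ha0, zero_add] at ha
  exact hx ha

theorem e_mul_eq_zero {a b : A} (ha0 : S.e a = S.zero) (hb0 : S.e b = S.zero) :
    S.e (S.mul a b) = S.zero := by
  rw [S.e_mul, ha0, hb0, zero_mul_of_e_eq_zero hb0, zero_mul_of_e_eq_zero ha0, S.add_zero]

theorem mul_ne_e {a b : A} (ha : a ≠ S.e a) (ha0 : S.e a = S.zero) (hb : b ≠ S.e b)
    (hb0 : S.e b = S.zero) : S.mul a b ≠ S.e (S.mul a b) := by
  rw [e_mul_eq_zero ha0 hb0]
  intro h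
  have h' := mul_u_eq_zero_of_mul_eq_zero hb hb0 h
  rw [u_eq_one hb hb0, S.mul_comm, S.one_mul] at h'
  exact ha (h'.trans ha0.symm)

theorem le_of_mul_le_mul_of_e_eq_zero {p q P : A} (hp : IsMagnitude S p)
    (hq : IsMagnitude S q) (hP : P ≠ S.e P) (hP0 : S.e P = S.zero)
    (h : S.le (S.mul p P) (S.mul q P)) : S.le p q := by
  rcases S.le_total p q with h' | h'
  · exact h'
  have heq : S.mul p P = S.mul q P := by
    refine S.le_antisymm _ _ h ?_
    rw [S.mul_comm q, S.mul_comm p]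
    exact mul_le_mul_of_isMagnitude hq hp h' P
  have h₁ : S.mul (S.mul p P) (S.inv P) = S.mul (S.mul q P) (S.inv P) := by rw [heq]
  rw [← S.mul_assoc, ← S.mul_assoc, S.mul_inv P hP, u_eq_one hP hP0, S.mul_comm p,
    S.mul_comm q, S.one_mul, S.one_mul] at h₁
  rw [h₁]
  exact S.le_refl q

end Precise

section Maximal

theorem not_add_self_le_one {t : A} (ht : t ≠ S.e t) (hpos : S.le (S.e t) t)
    (hidem : S.mul t t = t) : ¬ S.le (S.add t t) S.one := by
  intro h
  have he : S.mul (S.e t) t = S.e t := by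
    have h' := S.e_mul t t
    rw [hidem, ((S.isMagnitude_e t).mul_right t).add_self] at h'
    exact h'.symm
  have h₁ : S.le (S.mul t (S.add t t)) t := by
    simpa only [S.mul_comm t S.one, S.one_mul] using S.compat_mul t _ _ hpos (Ne.symm ht) h
  have h₂ : S.add t t = S.add (S.mul t (S.add t t)) (S.e t) := by
    have h' := S.dist t t t
    rwa [hidem, he, ← S.add_assoc, (S.isMagnitude_e t).add_self] at h'
  have h₃ : S.le (S.add t t) (S.add (S.e t) t) := by
    rw [h₂, S.add_comm (S.e t)]
    exact S.add_le_add _ _ _ h₁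
  have h₄ := le_add_e_of_add_le_add h₃
  rw [(S.isMagnitude_e t).add_self] at h₄
  exact ht (S.le_antisymm _ _ h₄ hpos)

theorem exists_u_add_u_le_isMagnitude :
    ∃ σ m : A, σ ≠ S.e σ ∧ IsMagnitude S m ∧ S.le (S.add (S.u σ) (S.u σ)) m := by
  obtain ⟨σ, n, hσ, hσ₀, hn, hσn⟩ := exists_zeroless_le_isMagnitude (S := S)
  have h2σ : S.le (S.add σ σ) n := by
    simpa only [hn.add_self] using add_le_add_of_le_of_le hσn hσn
  refine ⟨σ, S.add (S.mul (S.inv σ) n) (S.mul (S.e (S.inv σ)) σ), hσ,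
    isMagnitude_add (hn.mul_left _) ((S.isMagnitude_e _).mul_right σ), ?_⟩
  -- `u σ + u σ = σ⁻¹(σ + σ) + e(σ⁻¹)σ` by modified distributivity, and `σ + σ ≤ n`
  have h := S.dist (S.inv σ) σ σ
  rw [S.mul_comm (S.inv σ) σ, S.mul_inv σ hσ, ← S.add_assoc,
    ((S.isMagnitude_e _).mul_right σ).add_self] at h
  rw [h]
  exact S.add_le_add _ _ _ (S.compat_mul _ _ _ (e_inv_le_inv hσ (e_le_of_zero_le hσ₀))
    (Ne.symm (inv_ne_e hσ)) h2σ)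

theorem exists_isMagnitude_not_le_one : ∃ k : A, IsMagnitude S k ∧ ¬ S.le k S.one := by
  obtain ⟨σ, m, hσ, hm, h⟩ := exists_u_add_u_le_isMagnitude (S := S)
  exact ⟨m, hm, fun hm₁ => not_add_self_le_one (u_ne_e hσ) (e_u_le_u hσ) (u_mul_self hσ)
    (S.le_trans _ _ _ h hm₁)⟩

theorem le_e_M {k : A} (hk : IsMagnitude S k) : S.le k (S.e S.M) := by
  apply le_e_of_add_eq_self
  have h := S.e_add_M k
  rw [hk, S.add_comm] at h
  exact h

theorem add_e_M_of_le {t : A} (h₁ : S.le t (S.e S.M)) (h₂ : S.le (S.neg t) (S.e S.M)) :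
    S.add t (S.e S.M) = S.e S.M := by
  have hM := S.isMagnitude_e S.M
  apply S.le_antisymm
  · simpa only [hM.add_self] using S.add_le_add _ _ (S.e S.M) h₁
  have h₃ : S.e S.M = S.add t (S.add (S.neg t) (S.e S.M)) := by
    rw [S.add_assoc, S.add_neg,
      (S.isMagnitude_e t).add_eq_right_of_le hM (le_e_M (S.isMagnitude_e t))]
  have h₄ : S.le (S.add (S.neg t) (S.e S.M)) (S.e S.M) := by
    simpa only [hM.add_self] using S.add_le_add _ _ (S.e S.M) h₂
  conv_lhs => rw [h₃]
  exact add_le_add_left t h₄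

theorem le_e_M_of_e_eq_zero {a : A} (ha0 : S.e a = S.zero) : S.le a (S.e S.M) := by
  have hM := S.isMagnitude_e S.M
  rcases S.le_total S.zero a with hpos | hneg
  · by_cases ha : a = S.zero
    · rw [ha]
      exact hM.zero_le
    obtain ⟨k, hk, hk₁⟩ := exists_isMagnitude_not_le_one (S := S)
    have h := S.compat_mul a _ _ (by rw [ha0]; exact hpos) (by rw [ha0]; exact Ne.symm ha)
      ((S.le_total k S.one).resolve_left hk₁)
    rw [S.mul_comm a S.one, S.one_mul] at h
    exact S.le_trans _ _ _ h (le_e_M (hk.mul_left a))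
  · exact S.le_trans _ _ _ hneg hM.zero_le

theorem isMagnitude_M : IsMagnitude S S.M := by
  obtain ⟨a, ha, ha0⟩ := S.decomp S.M
  have h := add_e_M_of_le (le_e_M_of_e_eq_zero ha0) (le_e_M_of_e_eq_zero (by rw [S.e_neg, ha0]))
  show S.e S.M = S.M
  conv_rhs => rw [ha, h]

theorem not_M_le_one : ¬ S.le S.M S.one := by
  intro h
  obtain ⟨k, hk, hk₁⟩ := exists_isMagnitude_not_le_one (S := S)
  have hk' := le_e_M hk
  rw [isMagnitude_M] at hk'
  exact hk₁ (S.le_trans _ _ _ hk' h)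

end Maximal

section Distributivity

theorem distrib_iff (x y z : A) :
    S.add (S.mul x y) (S.mul x z) = S.mul x (S.add y z) ↔
      (S.mul (S.e x) (S.add y z) = S.add (S.mul (S.e x) y) (S.mul (S.e x) z) ∨
        S.le (S.add (S.mul (S.e x) y) (S.mul (S.e x) z)) (S.mul (S.e (S.add y z)) x)) := by
  have hp := S.isMagnitude_e x
  rw [S.dist, ← S.add_assoc,
    add_eq_self_iff_le_e (isMagnitude_add (hp.mul_right y) (hp.mul_right z)), S.e_mul,
    le_add_iff (hp.mul_right _) ((S.isMagnitude_e _).mul_right x)]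
  refine or_congr_left ⟨fun h => S.le_antisymm _ _ (hp.mul_add_le y z) h, fun h => ?_⟩
  rw [h]
  exact S.le_refl _

theorem e_add_mul (y z x : A) :
    S.mul (S.e (S.add y z)) x = S.add (S.mul (S.e y) x) (S.mul (S.e z) x) := by
  rw [e_add_eq, S.mul_comm _ x, mul_add_of_isMagnitude (S.isMagnitude_e y) (S.isMagnitude_e z),
    S.mul_comm x, S.mul_comm x]

variable {x y z : A}

theorem e_mul_add_of_isMagnitude_left (hy : IsMagnitude S y) :
    S.mul (S.e x) (S.add y z) = S.add (S.mul (S.e x) y) (S.mul (S.e x) z) := by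
  rw [S.add_comm y, (S.isMagnitude_e x).mul_add_of_isMagnitude hy, S.add_comm]

theorem e_mul_add_of_isMagnitude_right (hz : IsMagnitude S z) :
    S.mul (S.e x) (S.add y z) = S.add (S.mul (S.e x) y) (S.mul (S.e x) z) :=
  (S.isMagnitude_e x).mul_add_of_isMagnitude hz y

theorem e_mul_add_of_isMagnitude_of_le (hx : IsMagnitude S x)
    (h : S.le (S.add (S.mul (S.e x) y) (S.mul (S.e x) z)) (S.mul (S.e (S.add y z)) x)) :
    S.mul (S.e x) (S.add y z) = S.add (S.mul (S.e x) y) (S.mul (S.e x) z) := by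
  refine S.le_antisymm _ _ ((S.isMagnitude_e x).mul_add_le y z) (S.le_trans _ _ _ h ?_)
  conv_lhs => rw [← hx]
  rw [S.mul_comm (S.e x)]
  exact e_mul_le_mul (S.isMagnitude_e x) (S.add y z)

theorem e_mul_le_e_mul_of_e_u_le (hx : x ≠ S.e x) (hy : y ≠ S.e y)
    (h : S.le (S.e (S.u x)) (S.e (S.u y))) : S.le (S.mul (S.e x) y) (S.mul (S.e y) x) := by
  rw [e_mul_eq_e_u_mul_mul hx, e_mul_eq_e_u_mul_mul hy, S.mul_comm y x, S.mul_comm (S.e (S.u x)),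
    S.mul_comm (S.e (S.u y))]
  exact mul_le_mul_of_isMagnitude (S.isMagnitude_e _) (S.isMagnitude_e _) h _

theorem e_mul_add_eq_or_le_of_e_u_le (hx : x ≠ S.e x) (hy : y ≠ S.e y)
    (h : S.le (S.e (S.u x)) (S.e (S.u y))) (z : A) :
    S.mul (S.e x) (S.add y z) = S.add (S.mul (S.e x) y) (S.mul (S.e x) z) ∨
      S.le (S.add (S.mul (S.e x) y) (S.mul (S.e x) z)) (S.mul (S.e (S.add y z)) x) := by
  have hp := S.isMagnitude_e x
  have hz := hp.mul_le_mul_add_add_mul y z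
  rcases S.le_total (S.mul (S.e x) y) (S.mul (S.e x) (S.add y z)) with h' | h'
  · left
    rw [S.add_comm, (hp.mul_right y).add_eq_right_of_le (hp.mul_right _) h'] at hz
    exact S.le_antisymm _ _ (hp.mul_add_le y z)
      (add_le (hp.mul_right y) (hp.mul_right z) h' hz)
  · right
    rw [(hp.mul_right _).add_eq_right_of_le (hp.mul_right y) h'] at hz
    have hy' : S.le (S.mul (S.e x) y) (S.mul (S.e (S.add y z)) x) := by
      rw [e_add_mul]
      exact S.le_trans _ _ _ (e_mul_le_e_mul_of_e_u_le hx hy h)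
        (le_add_left ((S.isMagnitude_e y).mul_right x) ((S.isMagnitude_e z).mul_right x))
    exact add_le (hp.mul_right y) (hp.mul_right z) hy' (S.le_trans _ _ _ hz hy')

theorem e_mul_eq_e_u_mul_mul_of_eq_add_e {a b : A} (hx : x ≠ S.e x) (hy : y ≠ S.e y)
    (ha : x = S.add a (S.e x)) (hb : y = S.add b (S.e y)) :
    S.mul (S.e x) y = S.mul (S.e (S.u x)) (S.mul a b) := by
  rw [(S.isMagnitude_e x).mul_eq_mul_of_eq_add_e hy hb, e_eq_e_u_mul hx ha, S.mul_assoc]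

theorem e_u_le_add_of_le (hx : x ≠ S.e x) (hy : y ≠ S.e y) (hz : z ≠ S.e z)
    (h : S.le (S.add (S.mul (S.e x) y) (S.mul (S.e x) z)) (S.mul (S.e (S.add y z)) x)) :
    S.le (S.e (S.u x)) (S.add (S.e (S.u y)) (S.e (S.u z))) := by
  obtain ⟨a, ha, ha0⟩ := S.decomp x
  obtain ⟨b, hb, hb0⟩ := S.decomp y
  obtain ⟨c, hc, hc0⟩ := S.decomp z
  have hα := S.isMagnitude_e (S.u x)
  have hβ := S.isMagnitude_e (S.u y)
  have hγ := S.isMagnitude_e (S.u z)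
  have hm := isMagnitude_add hβ hγ
  rw [e_add_mul, e_mul_eq_e_u_mul_mul_of_eq_add_e hx hy ha hb,
    e_mul_eq_e_u_mul_mul_of_eq_add_e hx hz ha hc, e_mul_eq_e_u_mul_mul_of_eq_add_e hy hx hb ha,
    e_mul_eq_e_u_mul_mul_of_eq_add_e hz hx hc ha, S.mul_comm b, S.mul_comm c] at h
  -- with `P = a b`, `Q = a c` and `m = R y + R z`: `R x P + R x Q ≤ m P + m Q`
  have hβm : S.le (S.mul (S.e (S.u y)) (S.mul a b))
      (S.mul (S.add (S.e (S.u y)) (S.e (S.u z))) (S.mul a b)) := by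
    rw [S.mul_comm _ (S.mul a b), S.mul_comm _ (S.mul a b)]
    exact mul_le_mul_of_isMagnitude hβ hm (le_add_left hβ hγ) _
  have hγm : S.le (S.mul (S.e (S.u z)) (S.mul a c))
      (S.mul (S.add (S.e (S.u y)) (S.e (S.u z))) (S.mul a c)) := by
    rw [S.mul_comm _ (S.mul a c), S.mul_comm _ (S.mul a c)]
    exact mul_le_mul_of_isMagnitude hγ hm (le_add_right hβ hγ) _
  have h' := S.le_trans _ _ _ h (add_le_add_of_le_of_le hβm hγm)
  rcases add_eq_or (hm.mul_right (S.mul a b)) (hm.mul_right (S.mul a c)) with he | he <;>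
    rw [he] at h'
  · exact le_of_mul_le_mul_of_e_eq_zero hα hm (mul_ne_e (e_ne_of_eq_add_e hx ha ha0) ha0
      (e_ne_of_eq_add_e hy hb hb0) hb0) (e_mul_eq_zero ha0 hb0)
      (S.le_trans _ _ _ (le_add_left (hα.mul_right _) (hα.mul_right _)) h')
  · exact le_of_mul_le_mul_of_e_eq_zero hα hm (mul_ne_e (e_ne_of_eq_add_e hx ha ha0) ha0
      (e_ne_of_eq_add_e hz hc hc0) hc0) (e_mul_eq_zero ha0 hc0)
      (S.le_trans _ _ _ (le_add_right (hα.mul_right _) (hα.mul_right _)) h')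

end Distributivity

section RelativeUncertaintyCriterion

variable {x y z : A}

theorem R_of_eq_e {w : A} (hw : w = S.e w) : S.R w = S.M := if_pos hw

theorem R_of_ne_e {w : A} (hw : w ≠ S.e w) : S.R w = S.e (S.u w) := if_neg hw

theorem not_M_le_R_add (hy : y ≠ S.e y) (hz : z ≠ S.e z) :
    ¬ S.le S.M (S.add (S.R y) (S.R z)) := by
  rw [R_of_ne_e hy, R_of_ne_e hz]
  exact fun h => not_M_le_one (S.le_trans _ _ _ h
    (add_le (S.isMagnitude_e _) (S.isMagnitude_e _) (e_u_le_one hy) (e_u_le_one hz)))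

theorem or_le_e_add_mul_iff_or_e_u_le_add (hx : x ≠ S.e x) (hy : y ≠ S.e y) (hz : z ≠ S.e z) :
    (S.mul (S.e x) (S.add y z) = S.add (S.mul (S.e x) y) (S.mul (S.e x) z) ∨
        S.le (S.add (S.mul (S.e x) y) (S.mul (S.e x) z)) (S.mul (S.e (S.add y z)) x)) ↔
      (S.mul (S.e x) (S.add y z) = S.add (S.mul (S.e x) y) (S.mul (S.e x) z) ∨
        S.le (S.e (S.u x)) (S.add (S.e (S.u y)) (S.e (S.u z)))) := by
  refine ⟨Or.imp_right (e_u_le_add_of_le hx hy hz), ?_⟩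
  rintro (hI | h)
  · exact Or.inl hI
  rcases add_eq_or (S.isMagnitude_e (S.u y)) (S.isMagnitude_e (S.u z)) with he | he <;>
    rw [he] at h
  · exact e_mul_add_eq_or_le_of_e_u_le hx hy h z
  · have h' := e_mul_add_eq_or_le_of_e_u_le hx hz h y
    rwa [S.add_comm z y, S.add_comm (S.mul (S.e x) z)] at h'

end RelativeUncertaintyCriterion

end Solid

theorem stmt19 {A : Type*} (S : Solid A) (x y z : A) :
    S.add (S.mul x y) (S.mul x z) = S.mul x (S.add y z) ↔
    (S.mul (S.e x) (S.add y z) =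
        S.add (S.mul (S.e x) y) (S.mul (S.e x) z) ∨
      S.le (S.R x) (S.add (S.R y) (S.R z))) := by
  rw [Solid.distrib_iff]
  by_cases hy : y = S.e y
  · have hI := Solid.e_mul_add_of_isMagnitude_left (x := x) (z := z) hy.symm
    exact iff_of_true (Or.inl hI) (Or.inl hI)
  by_cases hz : z = S.e z
  · have hI := Solid.e_mul_add_of_isMagnitude_right (x := x) (y := y) hz.symm
    exact iff_of_true (Or.inl hI) (Or.inl hI)
  by_cases hx : x = S.e x
  · rw [Solid.R_of_eq_e hx, or_iff_left (Solid.not_M_le_R_add hy hz)]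
    exact or_iff_left_of_imp (Solid.e_mul_add_of_isMagnitude_of_le hx.symm)
  · rw [Solid.R_of_ne_e hx, Solid.R_of_ne_e hy, Solid.R_of_ne_e hz]
    exact Solid.or_le_e_add_mul_iff_or_e_u_le_add hx hy hz
end
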